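/- arXiv:1504.02671 — 2 statements merged into one kernel-verified Lean document; each statement's English description precedes it below -/
import Mathlib

section
/- Let T be a string, let i, j, j' be positions in T and let δ be a natural number. If LCE(i, j) ≥ δ and LCE(j', j + δ) ≥ LCE(i + δ, j + δ), then LCE(i, j) = δ + min(LCE(i + δ, j'), LCE(j', j + δ)). (This is the correctness of one round of the deterministic query reduction.) -/
/-- The longest common extension of suffixes `i` and `j` of `T`: the largest `ℓ`
with `ℓ ≤ |T| - i`, `ℓ ≤ |T| - j` and `(T.drop i).take ℓ = (T.drop j).take ℓ`. -/
def lce {α : Type*} [DecidableEq α] (T : List α) (i j : ℕ) : ℕ :=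
  Nat.findGreatest
    (fun ℓ => ℓ ≤ T.length - i ∧ ℓ ≤ T.length - j ∧ (T.drop i).take ℓ = (T.drop j).take ℓ)
    T.length

lemma lce_spec {α : Type*} [DecidableEq α] (T : List α) (i j : ℕ) :
    lce T i j ≤ T.length - i ∧ lce T i j ≤ T.length - j ∧
      (T.drop i).take (lce T i j) = (T.drop j).take (lce T i j) :=
  Nat.findGreatest_spec (P := fun ℓ => ℓ ≤ T.length - i ∧ ℓ ≤ T.length - j ∧
      (T.drop i).take ℓ = (T.drop j).take ℓ)
    (Nat.zero_le _) ⟨Nat.zero_le _, Nat.zero_le _, rfl⟩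

lemma le_lce {α : Type*} [DecidableEq α] {T : List α} {i j ℓ : ℕ}
    (h1 : ℓ ≤ T.length - i) (h2 : ℓ ≤ T.length - j)
    (h3 : (T.drop i).take ℓ = (T.drop j).take ℓ) : ℓ ≤ lce T i j :=
  Nat.le_findGreatest (h1.trans (Nat.sub_le _ _)) ⟨h1, h2, h3⟩

lemma lce_comm {α : Type*} [DecidableEq α] (T : List α) (i j : ℕ) :
    lce T i j = lce T j i := by
  obtain ⟨a, b, c⟩ := lce_spec T i j
  obtain ⟨a', b', c'⟩ := lce_spec T j i
  exact le_antisymm (le_lce b a c.symm) (le_lce b' a' c'.symm)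

lemma take_lce_take {α : Type*} [DecidableEq α] {T : List α} {i j m : ℕ}
    (h : m ≤ lce T i j) : (T.drop i).take m = (T.drop j).take m := by
  have c := (lce_spec T i j).2.2
  have := congrArg (List.take m) c
  simpa [List.take_take, Nat.min_eq_left h] using this

lemma lce_tri {α : Type*} [DecidableEq α] (T : List α) (a b c : ℕ) :
    min (lce T a c) (lce T c b) ≤ lce T a b := by
  set m := min (lce T a c) (lce T c b) with hm
  apply le_lce
  · exact le_trans (min_le_left _ _) (lce_spec T a c).1
  · exact le_trans (min_le_right _ _) (lce_spec T c b).2.1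
  · calc (T.drop a).take m = (T.drop c).take m := take_lce_take (min_le_left _ _)
      _ = (T.drop b).take m := take_lce_take (min_le_right _ _)

lemma lce_shift {α : Type*} [DecidableEq α] (T : List α) (i j δ : ℕ)
    (h : δ ≤ lce T i j) : lce T i j = δ + lce T (i + δ) (j + δ) := by
  obtain ⟨a, b, c⟩ := lce_spec T i j
  set L := lce T i j with hL
  have h1 : L - δ ≤ lce T (i + δ) (j + δ) := by
    apply le_lce
    · omega
    · omega
    · have := congrArg (List.drop δ) c
      simpa [List.drop_take, List.drop_drop, Nat.add_comm] using this
  have h2 : δ + lce T (i + δ) (j + δ) ≤ L := by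
    obtain ⟨a', b', c'⟩ := lce_spec T (i + δ) (j + δ)
    set M := lce T (i + δ) (j + δ) with hM
    apply le_lce
    · omega
    · omega
    · rw [List.take_add, List.take_add]
      congr 1
      · exact take_lce_take h
      · simpa [List.drop_drop, Nat.add_comm] using c'
  omega

/-- Correctness of one round of the deterministic query reduction. -/
theorem stmt_2 {α : Type*} [DecidableEq α] (T : List α) (i j j' δ : ℕ)
    (hi : i ≤ T.length) (hj : j ≤ T.length) (hj' : j' ≤ T.length)
    (h1 : lce T i j ≥ δ)
    (h2 : lce T j' (j + δ) ≥ lce T (i + δ) (j + δ)) :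
    lce T i j = δ + min (lce T (i + δ) j') (lce T j' (j + δ)) := by
  have key := lce_shift T i j δ h1
  have t1 := lce_tri T (i + δ) j' (j + δ)
  have t2 := lce_tri T (i + δ) (j + δ) j'
  have hcb := lce_comm T (j + δ) j'
  omega
end

section
/- Let T be a string, let τ ≥ 1, and let i be a position with i + 2τ ≤ |T|. Let W = (T.drop i).take (2τ) be the window of length 2τ starting at i, suppose W is periodic, and set p = per(W) (so p ≤ τ). Let ℓ be the largest ℓ' with ℓ' ≤ |T| − i such that p is a period of (T.drop i).take ℓ'. Let d satisfy 0 < d ≤ τ. If LCE(i, i + d) ≥ 2τ, then d is a multiple of p and LCE(i, i + d) = ℓ − d. (This is the correctness of the query algorithm for nearby indices.) -/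
/-- `p` is a period of the string `S`: `0 < p ≤ |S|` and characters `p` apart agree. -/
def IsPeriod {α : Type*} (S : List α) (p : ℕ) : Prop :=
  0 < p ∧ p ≤ S.length ∧ ∀ k < S.length - p, S[k]? = S[k + p]?

instance {α : Type*} [DecidableEq α] (S : List α) (p : ℕ) : Decidable (IsPeriod S p) := by
  unfold IsPeriod; infer_instance

/-- `per S` is the smallest period of `S`. -/
noncomputable def per {α : Type*} (S : List α) : ℕ := sInf {p | IsPeriod S p}

section Aux

variable {α : Type*}

lemma isPeriod_get {S : List α} {p : ℕ} (h : IsPeriod S p) {k : ℕ}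
    (hk : k + p < S.length) : S[k]? = S[k + p]? :=
  h.2.2 k (by omega)

lemma isPeriod_iter {S : List α} {p : ℕ} (h : IsPeriod S p) :
    ∀ (j k : ℕ), k + p * j < S.length → S[k]? = S[k + p * j]? := by
  intro j
  induction j with
  | zero => simp
  | succ j ih =>
    intro k hk
    rw [Nat.mul_succ] at hk
    have h1 : S[k]? = S[k + p]? := isPeriod_get h (by omega)
    have h2 : S[k + p]? = S[k + p + p * j]? := ih (k + p) (by omega)
    rw [h1, h2, Nat.mul_succ]
    congr 1
    omega

lemma isPeriod_take {S : List α} {p m : ℕ} (h : IsPeriod S p) (hm : p ≤ m)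
    (hmS : m ≤ S.length) : IsPeriod (S.take m) p := by
  obtain ⟨hp, hpS, hS⟩ := h
  refine ⟨hp, by rw [List.length_take]; omega, ?_⟩
  intro k hk
  rw [List.length_take] at hk
  have hk1 : k < m := by omega
  have hk2 : k + p < m := by omega
  rw [List.getElem?_take, List.getElem?_take, if_pos hk1, if_pos hk2]
  exact hS k (by omega)

lemma isPeriod_dvd {S : List α} {p d : ℕ} (h : IsPeriod S p) (hdvd : p ∣ d) (hd0 : 0 < d)
    (hdS : d ≤ S.length) : IsPeriod S d := by
  obtain ⟨m, rfl⟩ := hdvd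
  exact ⟨hd0, hdS, fun k hk => isPeriod_iter h m k (by omega)⟩

lemma period_sub {S : List α} {p q : ℕ} (hp : IsPeriod S p) (hq : IsPeriod S q)
    (hpq : p < q) (hlen : p + q ≤ S.length) : IsPeriod S (q - p) := by
  refine ⟨by omega, by omega, ?_⟩
  intro k hk
  have hk' : k + (q - p) < S.length := by omega
  by_cases hcase : k + q < S.length
  · have h1 := isPeriod_get hq (show k + q < S.length from hcase)
    have h2 := isPeriod_get hp (show (k + (q - p)) + p < S.length by omega)
    rw [h1, h2]
    congr 1
    omega
  · have h1 := isPeriod_get hp (show (k - p) + p < S.length by omega)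
    have h2 := isPeriod_get hq (show (k - p) + q < S.length by omega)
    have e1 : k - p + p = k := by omega
    have e2 : k - p + q = k + (q - p) := by omega
    rw [e1] at h1
    rw [e2] at h2
    rw [← h1, h2]

lemma fine_wilf_aux (n : ℕ) : ∀ {S : List α} {p q : ℕ}, p + q ≤ n → IsPeriod S p →
    IsPeriod S q → p + q ≤ S.length → IsPeriod S (Nat.gcd p q) := by
  induction n with
  | zero => intro S p q hn hp _ _; have := hp.1; omega
  | succ n ih =>
    intro S p q hn hp hq hlen
    rcases lt_trichotomy p q with h | h | h
    · have hsub := period_sub hp hq h hlen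
      have hg : Nat.gcd p (q - p) = Nat.gcd p q := Nat.gcd_sub_self_right (le_of_lt h)
      rw [← hg]
      exact ih (by have := hp.1; omega) hp hsub (by omega)
    · rw [h, Nat.gcd_self]
      exact hq
    · have hsub := period_sub hq hp h (by omega)
      have hg : Nat.gcd (p - q) q = Nat.gcd p q := Nat.gcd_sub_self_left (le_of_lt h)
      rw [← hg]
      exact ih (by have := hq.1; omega) hsub hq (by omega)

lemma fine_wilf {S : List α} {p q : ℕ} (hp : IsPeriod S p) (hq : IsPeriod S q)
    (hlen : p + q ≤ S.length) : IsPeriod S (Nat.gcd p q) :=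
  fine_wilf_aux (p + q) le_rfl hp hq hlen

lemma take_drop_getElem? (T : List α) (i m k : ℕ) (hk : k < m) :
    ((T.drop i).take m)[k]? = T[i + k]? := by
  rw [List.getElem?_take, if_pos hk, List.getElem?_drop]

end Aux

/-- Correctness of the query algorithm for nearby indices: if the window
`W = T[i…i+2τ)` is periodic with period `p = per W ≤ τ`, `0 < d ≤ τ`, and
`LCE(i, i+d) ≥ 2τ`, then `p ∣ d` and `LCE(i, i+d) = ℓ - d`, where `ℓ` is the largest
`ℓ' ≤ |T| - i` such that `p` is a period of `T[i…i+ℓ')`. -/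
theorem stmt_7 {α : Type*} [DecidableEq α] (T : List α) (τ i d : ℕ)
    (hτ : 1 ≤ τ) (hiT : i + 2 * τ ≤ T.length)
    (hper : per ((T.drop i).take (2 * τ)) ≤ τ)
    (hd0 : 0 < d) (hdτ : d ≤ τ)
    (hlce : lce T i (i + d) ≥ 2 * τ) :
    per ((T.drop i).take (2 * τ)) ∣ d ∧
      lce T i (i + d) =
        (Nat.findGreatest
          (fun ℓ' => IsPeriod ((T.drop i).take ℓ') (per ((T.drop i).take (2 * τ))))
          (T.length - i)) - d := by
  set W : List α := (T.drop i).take (2 * τ) with hW_def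
  set p : ℕ := per W with hp_def
  have lenW : W.length = 2 * τ := by
    rw [hW_def, List.length_take, List.length_drop]; omega
  have memW : IsPeriod W (2 * τ) := by
    refine ⟨by omega, by rw [lenW], fun k hk => ?_⟩
    rw [lenW] at hk
    exact absurd hk (by omega)
  have hne : {q | IsPeriod W q}.Nonempty := ⟨2 * τ, memW⟩
  have hpW : IsPeriod W p := Nat.sInf_mem hne
  have hp0 : 0 < p := hpW.1
  -- basic facts about L := lce T i (i+d)
  have hQ : lce T i (i + d) ≤ T.length - i ∧ lce T i (i + d) ≤ T.length - (i + d) ∧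
      (T.drop i).take (lce T i (i + d)) = (T.drop (i + d)).take (lce T i (i + d)) := by
    unfold lce
    exact Nat.findGreatest_spec
      (P := fun ℓ => ℓ ≤ T.length - i ∧ ℓ ≤ T.length - (i + d) ∧
        (T.drop i).take ℓ = (T.drop (i + d)).take ℓ)
      (Nat.zero_le _) ⟨Nat.zero_le _, Nat.zero_le _, rfl⟩
  obtain ⟨hL1, hL2, heq⟩ := hQ
  set L : ℕ := lce T i (i + d) with hL_def
  have hidT : i + d ≤ T.length := by omega
  have hLd : L + d ≤ T.length - i := by omega
  -- the characters i+k and i+d+k agree for k < L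
  have key : ∀ k < L, T[i + k]? = T[i + d + k]? := by
    intro k hk
    have h := congrArg (fun l => l[k]?) heq
    rw [take_drop_getElem? T i L k hk, take_drop_getElem? T (i + d) L k hk] at h
    exact h
  -- d is a period of S := T[i .. i+L+d)
  have lenS : ((T.drop i).take (L + d)).length = L + d := by
    rw [List.length_take, List.length_drop]; omega
  have hdS : IsPeriod ((T.drop i).take (L + d)) d := by
    refine ⟨hd0, by omega, fun k hk => ?_⟩
    rw [lenS] at hk
    rw [take_drop_getElem? T i (L + d) k (by omega),
        take_drop_getElem? T i (L + d) (k + d) (by omega)]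
    have e : i + (k + d) = i + d + k := by omega
    rw [e]
    exact key k (by omega)
  -- d is a period of the window W
  have hW_take : W = ((T.drop i).take (L + d)).take (2 * τ) := by
    rw [hW_def, List.take_take]
    congr 1
    omega
  have hdW : IsPeriod W d := by
    rw [hW_take]
    exact isPeriod_take hdS (by omega) (by omega)
  -- Fine–Wilf: p divides d
  have hgcd : IsPeriod W (Nat.gcd p d) := fine_wilf hpW hdW (by omega)
  have hple : p ≤ Nat.gcd p d :=
    Nat.sInf_le (show Nat.gcd p d ∈ {q | IsPeriod W q} from hgcd)
  have hgle : Nat.gcd p d ≤ p := Nat.le_of_dvd hp0 (Nat.gcd_dvd_left p d)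
  have hpg : Nat.gcd p d = p := le_antisymm hgle hple
  have hdvd : p ∣ d := hpg ▸ Nat.gcd_dvd_right p d
  refine ⟨hdvd, ?_⟩
  -- p is a period of S = T[i .. i+L+d)
  have hpS : IsPeriod ((T.drop i).take (L + d)) p := by
    refine ⟨hp0, by omega, fun k hk => ?_⟩
    rw [lenS] at hk
    have hk' : k + p < L + d := by omega
    set r : ℕ := k % d with hr_def
    set t : ℕ := k / d with ht_def
    have hrt : r + d * t = k := Nat.mod_add_div k d
    have hrd : r < d := Nat.mod_lt _ hd0
    have h1 : ((T.drop i).take (L + d))[r]? = ((T.drop i).take (L + d))[k]? := by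
      have h := isPeriod_iter hdS t r (by rw [lenS]; omega)
      rwa [hrt] at h
    have h2 : ((T.drop i).take (L + d))[r + p]? = ((T.drop i).take (L + d))[k + p]? := by
      have h := isPeriod_iter hdS t (r + p) (by rw [lenS]; omega)
      have e : r + p + d * t = k + p := by omega
      rwa [e] at h
    have hr2τ : r + p < 2 * τ := by omega
    have h3 : ((T.drop i).take (L + d))[r]? = ((T.drop i).take (L + d))[r + p]? := by
      rw [take_drop_getElem? T i (L + d) r (by omega),
          take_drop_getElem? T i (L + d) (r + p) (by omega)]
      have hW1 : W[r]? = T[i + r]? := take_drop_getElem? T i (2 * τ) r (by omega)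
      have hW2 : W[r + p]? = T[i + (r + p)]? := take_drop_getElem? T i (2 * τ) (r + p) hr2τ
      have := hpW.2.2 r (by rw [lenW]; omega)
      rw [hW1, hW2] at this
      exact this
    rw [← h1, ← h2, h3]
  -- the maximal periodic prefix length ℓ
  set ℓ : ℕ := Nat.findGreatest (fun ℓ' => IsPeriod ((T.drop i).take ℓ') p) (T.length - i)
    with hℓ_def
  have hℓ_ge : L + d ≤ ℓ := Nat.le_findGreatest hLd hpS
  have hPℓ : IsPeriod ((T.drop i).take ℓ) p := by
    rw [hℓ_def]
    exact Nat.findGreatest_spec (P := fun ℓ' => IsPeriod ((T.drop i).take ℓ') p) hLd hpS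
  have hℓ_le : ℓ ≤ T.length - i := by rw [hℓ_def]; exact Nat.findGreatest_le _
  have lenP : ((T.drop i).take ℓ).length = ℓ := by
    rw [List.length_take, List.length_drop]; omega
  -- d is a period of T[i .. i+ℓ)
  have hdP : IsPeriod ((T.drop i).take ℓ) d :=
    isPeriod_dvd hPℓ hdvd hd0 (by omega)
  -- hence lce ≥ ℓ - d
  have heq2 : (T.drop i).take (ℓ - d) = (T.drop (i + d)).take (ℓ - d) := by
    apply List.ext_getElem?
    intro k
    by_cases hk : k < ℓ - d
    · rw [take_drop_getElem? T i (ℓ - d) k hk, take_drop_getElem? T (i + d) (ℓ - d) k hk]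
      have := hdP.2.2 k (by omega)
      rw [take_drop_getElem? T i ℓ k (by omega),
          take_drop_getElem? T i ℓ (k + d) (by omega)] at this
      have e : i + (k + d) = i + d + k := by omega
      rwa [e] at this
    · rw [List.getElem?_take, List.getElem?_take, if_neg hk, if_neg hk]
  have hLge : ℓ - d ≤ L := by
    rw [hL_def]
    unfold lce
    exact Nat.le_findGreatest (by omega) ⟨by omega, by omega, heq2⟩
  omega
end
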